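/- Let G = (ℤ/2ℤ) wr ℤ² with generating set {a, b, c}, where a generates the passive group ℤ/2ℤ (supported at the identity of ℤ²) and b, c are the standard generators of the active group ℤ². Then the subgroup H = ⟨b, c, [a,b]⟩ satisfies Δ_H^G(l) ⪰ l²; in particular, G = (ℤ/2ℤ) wr ℤ² contains a distorted finitely generated subgroup. -/

import Mathlib

open scoped Pointwise
open scoped commutatorElement

namespace DistortionPaper

section Defs

variable (A B : Type*) [Group A] [Group B]

/-- The base group of the restricted wreath product: finitely supported functions `B → A`
under pointwise multiplication, as a subgroup of `B → A`. -/
def WreathBase : Subgroup (B → A) where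
  carrier := {f | (Function.mulSupport f).Finite}
  one_mem' := by
    simp [Function.mulSupport_one]
  mul_mem' := by
    intro f g hf hg
    exact ((Set.Finite.union hf hg).subset (Function.mulSupport_mul f g))
  inv_mem' := by
    intro f hf
    simpa [Function.mulSupport_inv] using hf

/-- The shift automorphism of the base group: `(g ∘ f)(x) = f(x * g)`. -/
def wreathShift (g : B) : WreathBase A B ≃* WreathBase A B where
  toFun f := ⟨fun x => (f : B → A) (x * g), by
    have h : Function.mulSupport (fun x => (f : B → A) (x * g))
        ⊆ (fun x : B => x * g) ⁻¹' Function.mulSupport (f : B → A) := fun x hx => hx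
    exact (Set.Finite.preimage (Set.injOn_of_injective (mul_left_injective g)) f.2).subset h⟩
  invFun f := ⟨fun x => (f : B → A) (x * g⁻¹), by
    have h : Function.mulSupport (fun x => (f : B → A) (x * g⁻¹))
        ⊆ (fun x : B => x * g⁻¹) ⁻¹' Function.mulSupport (f : B → A) := fun x hx => hx
    exact (Set.Finite.preimage (Set.injOn_of_injective (mul_left_injective g⁻¹)) f.2).subset h⟩
  left_inv f := Subtype.ext <| funext fun x => by simp [mul_assoc]
  right_inv f := Subtype.ext <| funext fun x => by simp [mul_assoc]
  map_mul' f₁ f₂ := Subtype.ext <| funext fun _ => rfl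

/-- The action of `B` on the base group by shifts. -/
def wreathAction : B →* MulAut (WreathBase A B) where
  toFun g := wreathShift A B g
  map_one' := by
    refine MulEquiv.ext fun f => Subtype.ext <| funext fun x => ?_
    show (f : B → A) (x * 1) = (f : B → A) x
    rw [mul_one]
  map_mul' g₁ g₂ := by
    refine MulEquiv.ext fun f => Subtype.ext <| funext fun x => ?_
    show (f : B → A) (x * (g₁ * g₂)) = (f : B → A) (x * g₁ * g₂)
    rw [mul_assoc]

/-- The restricted wreath product `A wr B`. -/
abbrev WreathProduct := WreathBase A B ⋊[wreathAction A B] B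

/-- The element of the base group supported at `1 ∈ B` with value `a`. -/
noncomputable def toBase (a : A) : WreathBase A B := by
  classical
  exact ⟨fun x => if x = (1 : B) then a else 1, by
    apply Set.Finite.subset (Set.finite_singleton (1 : B))
    intro x hx
    simp only [Function.mem_mulSupport] at hx
    simp only [Set.mem_singleton_iff]
    by_contra hne
    rw [if_neg hne] at hx
    exact hx rfl⟩

/-- The canonical copy of `A` in `A wr B` (functions supported at `1`). -/
noncomputable def ofPassive (a : A) : WreathProduct A B :=
  SemidirectProduct.inl (toBase A B a)

/-- The canonical copy of `B` in `A wr B`. -/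
def ofActive (g : B) : WreathProduct A B := SemidirectProduct.inr g

/-- The generating set `S ∪ T` of `A wr B` obtained from generating sets `S` of `A`
and `T` of `B`. -/
def wreathGen (S : Set A) (T : Set B) : Set (WreathProduct A B) :=
  (fun a => ofPassive A B a) '' S ∪ (fun g => ofActive A B g) '' T

end Defs

/-- Word length of `g` with respect to the set `T`: the least `n` such that `g` is a
product of `n` elements of `T ∪ T⁻¹` (and `0` if no such `n` exists). -/
noncomputable def wordLength {G : Type*} [Group G] (T : Set G) (g : G) : ℕ :=
  sInf {n | ∃ f : Fin n → G, (∀ i, f i ∈ T ∪ T⁻¹) ∧ (List.ofFn f).prod = g}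

/-- The distortion function of a subgroup `H` of `G`, where `T` is a generating set of `G`
and `S` a generating set of `H`. -/
noncomputable def distortion {G : Type*} [Group G] (T : Set G) (H : Subgroup G)
    (S : Set H) (l : ℕ) : ℕ :=
  sSup (wordLength S '' {h : H | wordLength T (h : G) ≤ l})

/-- `f ⪯ g` : there is `C > 0` with `f l ≤ C * g (C * l)` for all `l`. -/
def Dominates (f g : ℕ → ℕ) : Prop := ∃ C : ℕ, 0 < C ∧ ∀ l, f l ≤ C * g (C * l)

/-- `f ≈ g` : `f ⪯ g` and `g ⪯ f`. -/
def DistEquiv (f g : ℕ → ℕ) : Prop := Dominates f g ∧ Dominates g f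

/-- A subgroup is subnormal if there is a finite chain from it to the whole group,
each term normal in the next. -/
def IsSubnormal {G : Type*} [Group G] (H : Subgroup G) : Prop :=
  ∃ (n : ℕ) (c : ℕ → Subgroup G), c 0 = H ∧ c n = ⊤ ∧
    ∀ i < n, c i ≤ c (i + 1) ∧ ∀ x ∈ c (i + 1), ∀ h ∈ c i, x * h * x⁻¹ ∈ c i

/-- `ℤ` as a multiplicative group. -/
abbrev Mℤ := Multiplicative ℤ

/-- The wreath product `ℤ wr ℤ`. -/
abbrev ZwrZ := WreathProduct Mℤ Mℤ

/-- The standard generator `a` of `ℤ wr ℤ` (passive copy, supported at `1`). -/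
noncomputable def aZ : ZwrZ := ofPassive Mℤ Mℤ (Multiplicative.ofAdd 1)

/-- The standard generator `b` of `ℤ wr ℤ` (active copy). -/
def bZ : ZwrZ := ofActive Mℤ Mℤ (Multiplicative.ofAdd 1)


/-- The wreath product `(ℤ/2ℤ) wr ℤ²`. -/
abbrev Z2wrZ2 := WreathProduct (Multiplicative (ZMod 2)) (Multiplicative (ℤ × ℤ))

/-- The generator `a` of the passive group `ℤ/2ℤ`. -/
noncomputable def a6 : Z2wrZ2 := ofPassive _ _ (Multiplicative.ofAdd (1 : ZMod 2))

/-- The first standard generator `b` of the active group `ℤ²`. -/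
def b6 : Z2wrZ2 := ofActive _ _ (Multiplicative.ofAdd ((1, 0) : ℤ × ℤ))

/-- The second standard generator `c` of the active group `ℤ²`. -/
def c6 : Z2wrZ2 := ofActive _ _ (Multiplicative.ofAdd ((0, 1) : ℤ × ℤ))

/-!
Every element of `H = ⟨b, c, [a,b]⟩` has a lamp configuration whose row-wise prefix sums `ψ` are
finitely supported (for `[a,b]` they form a single lamp), and under multiplication these
prefix-sum configurations add up after translation by the cursor. Hence the area `|supp ψ|` is
subadditive on `H`, and bounded by a constant times the word length in any finite generating set
of `H`. The element `[(ac)ⁿ, bⁿ]` has `G`-length at most `6n`, but its lamps are two columns of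
height `n` at distance `n`, whose prefix sums fill an `n × n` square: its `H`-length is of order
at least `n²`.
-/
open Function Multiplicative Subgroup

section WordLength

variable {G : Type*} [Group G] {T : Set G}

lemma wordLength_le_length (L : List G) (hL : ∀ x ∈ L, x ∈ T ∪ T⁻¹) :
    wordLength T L.prod ≤ L.length :=
  Nat.sInf_le ⟨L.get, fun i => hL _ (L.get_mem i), by rw [List.ofFn_get]⟩

lemma exists_list_length_eq_wordLength {g : G} (hg : g ∈ closure T) :
    ∃ L : List G, (∀ x ∈ L, x ∈ T ∪ T⁻¹) ∧ L.length = wordLength T g ∧ L.prod = g := by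
  rw [← mem_toSubmonoid, closure_toSubmonoid] at hg
  obtain ⟨L, hLT, hLg⟩ := Submonoid.exists_list_of_mem_closure hg
  obtain ⟨f, hfT, hfg⟩ := Nat.sInf_mem (⟨L.length, L.get, fun i => hLT _ (L.get_mem i),
    by rw [List.ofFn_get, hLg]⟩ : {n | ∃ f : Fin n → G, (∀ i, f i ∈ T ∪ T⁻¹) ∧
      (List.ofFn f).prod = g}.Nonempty)
  refine ⟨List.ofFn f, fun x hx => ?_, List.length_ofFn, hfg⟩
  obtain ⟨i, rfl⟩ := (List.mem_ofFn' f x).1 hx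
  exact hfT i

lemma wordLength_le_one {x : G} (hx : x ∈ T) : wordLength T x ≤ 1 := by
  simpa using wordLength_le_length [x] (by simp [hx])

lemma wordLength_mul_le {g h : G} (hg : g ∈ closure T) (hh : h ∈ closure T) :
    wordLength T (g * h) ≤ wordLength T g + wordLength T h := by
  obtain ⟨L, hLT, hL, rfl⟩ := exists_list_length_eq_wordLength hg
  obtain ⟨M, hMT, hM, rfl⟩ := exists_list_length_eq_wordLength hh
  rw [← hL, ← hM, ← List.prod_append, ← List.length_append]
  exact wordLength_le_length _ fun x hx => (List.mem_append.1 hx).elim (hLT x) (hMT x)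

lemma wordLength_inv_le {g : G} (hg : g ∈ closure T) : wordLength T g⁻¹ ≤ wordLength T g := by
  obtain ⟨L, hLT, hL, rfl⟩ := exists_list_length_eq_wordLength hg
  rw [← hL, List.prod_inv_reverse]
  refine (wordLength_le_length _ fun x hx => ?_).trans (by simp)
  obtain ⟨y, hy, rfl⟩ := List.mem_map.1 (List.mem_reverse.1 hx)
  rw [← Set.mem_inv, Set.union_inv, inv_inv, Set.union_comm]
  exact hLT y hy

lemma wordLength_pow_le {g : G} (hg : g ∈ closure T) (n : ℕ) :
    wordLength T (g ^ n) ≤ n * wordLength T g := by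
  induction n with
  | zero => simpa using wordLength_le_length (T := T) []
  | succ n ih =>
    rw [pow_succ, add_one_mul]
    exact (wordLength_mul_le (pow_mem hg n) hg).trans (by omega)

lemma wordLength_commutatorElement_le {g h : G} (hg : g ∈ closure T) (hh : h ∈ closure T) :
    wordLength T ⁅g, h⁆ ≤ 2 * (wordLength T g + wordLength T h) := by
  have hgh := mul_mem hg hh
  have hghg := mul_mem hgh (inv_mem hg)
  rw [commutatorElement_def]
  have := wordLength_mul_le hghg (inv_mem hh)
  have := wordLength_mul_le hgh (inv_mem hg)
  have := wordLength_mul_le hg hh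
  have := wordLength_inv_le hg
  have := wordLength_inv_le hh
  omega

lemma finite_setOf_mem_closure_wordLength_le (hT : T.Finite) (l : ℕ) :
    {g | g ∈ closure T ∧ wordLength T g ≤ l}.Finite := by
  have : Finite ↥(T ∪ T⁻¹) := (hT.union hT.inv).to_subtype
  refine ((List.finite_length_le ↥(T ∪ T⁻¹) l).image
    fun L => (L.map Subtype.val).prod).subset ?_
  rintro g ⟨hg, hgl⟩
  obtain ⟨L, hLT, hL, rfl⟩ := exists_list_length_eq_wordLength hg
  refine ⟨L.attach.map fun x => ⟨x.1, hLT x.1 x.2⟩, by simpa [hL] using hgl, ?_⟩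
  simp

lemma le_distortion (hT : T.Finite) {H : Subgroup G} (hHT : H ≤ closure T) (S : Set H)
    {h : H} {l : ℕ} (hl : wordLength T (h : G) ≤ l) :
    wordLength S h ≤ distortion T H S l := by
  refine le_csSup (Set.Finite.bddAbove (Set.Finite.image _ ?_)) ⟨h, hl, rfl⟩
  exact ((finite_setOf_mem_closure_wordLength_le hT l).preimage Subtype.val_injective.injOn).subset
    fun x hx => ⟨hHT x.2, hx⟩

end WordLength

lemma exists_le_mul_wordLength_of_subadditive {H : Type*} [Group H] {S : Set H} (hS : S.Finite)
    (hgen : closure S = ⊤) (ν : H → ℕ) (hν_one : ν 1 = 0)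
    (hν_mul : ∀ x y, ν (x * y) ≤ ν x + ν y) : ∃ C, ∀ h, ν h ≤ C * wordLength S h := by
  obtain ⟨C, hC⟩ := ((hS.union hS.inv).image ν).bddAbove
  have hprod : ∀ L : List H, (∀ x ∈ L, x ∈ S ∪ S⁻¹) → ν L.prod ≤ C * L.length := by
    intro L hL
    induction L with
    | nil => simp [hν_one]
    | cons x L ih =>
      rw [List.prod_cons, List.length_cons, mul_add_one]
      have hx := hC ⟨x, hL x List.mem_cons_self, rfl⟩
      have := ih fun y hy => hL y (List.mem_cons_of_mem x hy)
      have := hν_mul x L.prod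
      omega
  refine ⟨C, fun h => ?_⟩
  obtain ⟨L, hLS, hL, rfl⟩ := exists_list_length_eq_wordLength (hgen ▸ mem_top h)
  exact hL ▸ hprod L hLS

theorem dominates_distortion_of_subadditive {G : Type*} [Group G] {T : Set G} (hT : T.Finite)
    {H : Subgroup G} (hHT : H ≤ closure T) {S : Set H} (hS : S.Finite) (hgen : closure S = ⊤)
    (ν : H → ℕ) (hν_one : ν 1 = 0) (hν_mul : ∀ x y, ν (x * y) ≤ ν x + ν y)
    (f : ℕ → ℕ) (g : ℕ → H) (K : ℕ) (hgT : ∀ n, wordLength T (g n : G) ≤ K * n)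
    (hfg : ∀ n, f n ≤ ν (g n)) : Dominates f (distortion T H S) := by
  obtain ⟨C, hC⟩ := exists_le_mul_wordLength_of_subadditive hS hgen ν hν_one hν_mul
  refine ⟨C + K + 1, by omega, fun l => ?_⟩
  have hlen : wordLength T (g l : G) ≤ (C + K + 1) * l :=
    (hgT l).trans (Nat.mul_le_mul_right l (by omega))
  calc f l ≤ ν (g l) := hfg l
    _ ≤ C * wordLength S (g l) := hC _
    _ ≤ (C + K + 1) * distortion T H S ((C + K + 1) * l) :=
      Nat.mul_le_mul (by omega) (le_distortion hT hHT S hlen)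

lemma not_distEquiv_id_of_dominates_sq {f : ℕ → ℕ} (hf : Dominates (fun l => l ^ 2) f) :
    ¬ DistEquiv f (fun l => l) := by
  rintro ⟨⟨D, -, hD⟩, -⟩
  obtain ⟨C, -, hC⟩ := hf
  set L := C * D * D * C + 1
  have h1 : L ^ 2 ≤ C * f (C * L) := hC L
  have h2 : f (C * L) ≤ D * (D * (C * L)) := hD (C * L)
  have h3 : L ^ 2 ≤ (L - 1) * L := by
    calc L ^ 2 ≤ C * (D * (D * (C * L))) := h1.trans (Nat.mul_le_mul_left C h2)
      _ = (L - 1) * L := by simp only [L, Nat.add_sub_cancel]; ring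
  have := Nat.le_of_mul_le_mul_right (sq L ▸ h3) (by omega : 0 < L)
  omega

lemma commutatorElement_pow_right_mem {G : Type*} [Group G] {K : Subgroup G} {x y : G}
    (hy : y ∈ K) (hxy : ⁅x, y⁆ ∈ K) (n : ℕ) : ⁅x, y ^ n⁆ ∈ K := by
  induction n with
  | zero => simp
  | succ n ih =>
    rw [pow_succ', commutatorElement_mul_right_eq_mul_conj]
    exact mul_mem (mul_mem (mul_mem hxy hy) ih) (inv_mem hy)

section WreathProduct

lemma commute_of_right_eq_one {A B : Type*} [CommGroup A] [Group B] {g h : WreathProduct A B}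
    (hg : g.right = 1) (hh : h.right = 1) : Commute g h := by
  ext : 1
  · simp [hg, hh, mul_comm]
  · simp [hg, hh]

lemma conj_eq_conj_of_right_eq {A B : Type*} [CommGroup A] [Group B] {x x' y : WreathProduct A B}
    (hy : y.right = 1) (hx : x.right = x'.right) : x * y * x⁻¹ = x' * y * x'⁻¹ := by
  have hyx : y * (x'⁻¹ * x) = (x'⁻¹ * x) * y :=
    (commute_of_right_eq_one hy (by simp [hx])).eq
  calc x * y * x⁻¹ = x' * (y * (x'⁻¹ * x)) * x⁻¹ := by rw [hyx]; group
    _ = x' * y * x'⁻¹ := by group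

lemma right_commutatorElement {N G : Type*} [Group N] [CommGroup G] {φ : G →* MulAut N}
    {x y : N ⋊[φ] G} : ⁅x, y⁆.right = 1 := by
  rw [← SemidirectProduct.rightHom_eq_right, map_commutatorElement,
    (Commute.all _ _).commutator_eq]

end WreathProduct

section RowPrefixSum

variable {M : Type*} [AddCommMonoid M]

noncomputable def rowPrefixSum (φ : ℤ × ℤ → M) (v : ℤ × ℤ) : M :=
  ∑ᶠ x : ℤ, if x ≤ v.1 then φ (x, v.2) else 0

lemma finite_support_row_le {φ : ℤ × ℤ → M} (hφ : (support φ).Finite) (x₀ y : ℤ) :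
    (support fun x => if x ≤ x₀ then φ (x, y) else 0).Finite := by
  refine (hφ.preimage (Prod.mk_left_injective y).injOn).subset fun x hx => ?_
  by_contra h
  exact hx (by simp_all)

lemma rowPrefixSum_add {φ ψ : ℤ × ℤ → M} (hφ : (support φ).Finite) (hψ : (support ψ).Finite) :
    rowPrefixSum (φ + ψ) = rowPrefixSum φ + rowPrefixSum ψ := by
  ext v
  rw [Pi.add_apply, rowPrefixSum, rowPrefixSum, rowPrefixSum, ← finsum_add_distrib
    (finite_support_row_le hφ v.1 v.2) (finite_support_row_le hψ v.1 v.2)]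
  congr 1 with x
  split_ifs <;> simp

lemma rowPrefixSum_comp_add_right (φ : ℤ × ℤ → M) (w v : ℤ × ℤ) :
    rowPrefixSum (fun u => φ (u + w)) v = rowPrefixSum φ (v + w) := by
  rw [rowPrefixSum, rowPrefixSum]
  conv_rhs => rw [← finsum_comp_equiv (Equiv.addRight w.1)]
  congr 1 with x
  simp only [Equiv.coe_addRight, Prod.fst_add, Prod.snd_add, add_le_add_iff_right]
  rfl

lemma rowPrefixSum_of_eq_zero_off_column {φ : ℤ × ℤ → M} (hφ : ∀ v : ℤ × ℤ, v.1 ≠ 0 → φ v = 0)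
    (v : ℤ × ℤ) : rowPrefixSum φ v = if 0 ≤ v.1 then φ (0, v.2) else 0 := by
  rw [rowPrefixSum, finsum_eq_single _ 0 fun x hx => by simp [hφ (x, v.2) hx]]

lemma rowPrefixSum_zero : rowPrefixSum (0 : ℤ × ℤ → M) = 0 := by
  ext v
  simp [rowPrefixSum]

end RowPrefixSum

section Lamplighter

noncomputable def lamps (g : Z2wrZ2) (v : ℤ × ℤ) : ZMod 2 :=
  toAdd ((g.left : Multiplicative (ℤ × ℤ) → Multiplicative (ZMod 2)) (ofAdd v))

def cursor (g : Z2wrZ2) : ℤ × ℤ := toAdd g.right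

lemma lamps_mul (g h : Z2wrZ2) (v : ℤ × ℤ) :
    lamps (g * h) v = lamps g v + lamps h (v + cursor g) := rfl

lemma lamps_inv (g : Z2wrZ2) (v : ℤ × ℤ) : lamps g⁻¹ v = lamps g (v - cursor g) := by
  change -lamps g (v + -cursor g) = _
  rw [CharTwo.neg_eq, sub_eq_add_neg]

lemma lamps_one : lamps 1 = 0 := rfl

lemma cursor_mul (g h : Z2wrZ2) : cursor (g * h) = cursor g + cursor h := rfl

lemma finite_support_lamps (g : Z2wrZ2) : (support (lamps g)).Finite :=
  g.left.2.preimage (ofAdd.injective.injOn)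

lemma lamps_commutatorElement_of_lamps_eq_zero (x : Z2wrZ2) {y : Z2wrZ2} (hy : lamps y = 0)
    (v : ℤ × ℤ) : lamps ⁅x, y⁆ v = lamps x v + lamps x (v + cursor y) := by
  have hy' : ∀ u, lamps y⁻¹ u = 0 := fun u => by rw [lamps_inv, hy, Pi.zero_apply]
  simp only [commutatorElement_def, lamps_mul, lamps_inv, hy, hy', cursor_mul, Pi.zero_apply,
    add_zero]
  congr 2
  abel

end Lamplighter

section PrefixSupport

def prefixSupport (g : Z2wrZ2) : Set (ℤ × ℤ) := support (rowPrefixSum (lamps g))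

lemma finite_support_lamps_comp_add_right (g : Z2wrZ2) (w : ℤ × ℤ) :
    (support fun u => lamps g (u + w)).Finite :=
  (finite_support_lamps g).preimage (add_left_injective w).injOn

lemma rowPrefixSum_lamps_mul (g h : Z2wrZ2) (v : ℤ × ℤ) :
    rowPrefixSum (lamps (g * h)) v =
      rowPrefixSum (lamps g) v + rowPrefixSum (lamps h) (v + cursor g) := by
  rw [show lamps (g * h) = lamps g + fun u => lamps h (u + cursor g) from funext (lamps_mul g h),
    rowPrefixSum_add (finite_support_lamps g) (finite_support_lamps_comp_add_right h _),
    Pi.add_apply, rowPrefixSum_comp_add_right]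

lemma prefixSupport_mul_subset (g h : Z2wrZ2) :
    prefixSupport (g * h) ⊆ prefixSupport g ∪ (· + cursor g) ⁻¹' prefixSupport h := by
  intro v hv
  rw [prefixSupport, mem_support, rowPrefixSum_lamps_mul] at hv
  by_contra hcon
  simp only [Set.mem_union, Set.mem_preimage, prefixSupport, mem_support, not_or,
    not_not] at hcon
  rw [hcon.1, hcon.2, add_zero] at hv
  exact hv rfl

lemma prefixSupport_inv (g : Z2wrZ2) :
    prefixSupport g⁻¹ = (· - cursor g) ⁻¹' prefixSupport g := by
  ext v
  simp only [prefixSupport, mem_support, Set.mem_preimage, funext (lamps_inv g), sub_eq_add_neg,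
    rowPrefixSum_comp_add_right]

lemma prefixSupport_of_lamps_eq_zero {g : Z2wrZ2} (hg : lamps g = 0) : prefixSupport g = ∅ := by
  rw [prefixSupport, hg, rowPrefixSum_zero, support_zero]

def finitePrefixSubgroup : Subgroup Z2wrZ2 where
  carrier := {g | (prefixSupport g).Finite}
  one_mem' := by
    rw [Set.mem_ofPred_eq, prefixSupport_of_lamps_eq_zero lamps_one]
    exact Set.finite_empty
  mul_mem' {g h} hg hh :=
    (hg.union (hh.preimage (add_left_injective _).injOn)).subset (prefixSupport_mul_subset g h)
  inv_mem' {g} hg := by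
    rw [Set.mem_ofPred_eq, prefixSupport_inv]
    exact hg.preimage (sub_left_injective).injOn

lemma ncard_prefixSupport_mul_le {g h : Z2wrZ2} (hg : g ∈ finitePrefixSubgroup)
    (hh : h ∈ finitePrefixSubgroup) :
    (prefixSupport (g * h)).ncard ≤ (prefixSupport g).ncard + (prefixSupport h).ncard :=
  calc (prefixSupport (g * h)).ncard
      ≤ (prefixSupport g ∪ (· + cursor g) ⁻¹' prefixSupport h).ncard :=
        Set.ncard_le_ncard (prefixSupport_mul_subset g h)
          (Set.Finite.union hg (Set.Finite.preimage (add_left_injective _).injOn hh))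
    _ ≤ (prefixSupport g).ncard + ((· + cursor g) ⁻¹' prefixSupport h).ncard :=
        Set.ncard_union_le _ _
    _ = (prefixSupport g).ncard + (prefixSupport h).ncard := by
        rw [Set.ncard_preimage_of_injective_subset_range (add_left_injective _)
          fun v _ => ⟨v - cursor g, sub_add_cancel v _⟩]

def column (n : ℕ) (v : ℤ × ℤ) : ZMod 2 := if v.1 = 0 ∧ -(n : ℤ) < v.2 ∧ v.2 ≤ 0 then 1 else 0

lemma prefixSupport_commutatorElement {x y : Z2wrZ2} {m n : ℕ} (hx : lamps x = column n)
    (hy : lamps y = 0) (hcy : cursor y = ((m : ℤ), 0)) :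
    prefixSupport ⁅x, y⁆ = ↑(Finset.Ico (-(m : ℤ)) 0 ×ˢ Finset.Ioc (-(n : ℤ)) 0) := by
  have hcol : ∀ v : ℤ × ℤ, v.1 ≠ 0 → column n v = 0 := fun v hv => if_neg (by tauto)
  have hlamps : lamps ⁅x, y⁆ = column n + fun u => column n (u + cursor y) :=
    funext fun v => by rw [lamps_commutatorElement_of_lamps_eq_zero x hy, hx]; rfl
  ext ⟨v₁, v₂⟩
  rw [prefixSupport, hlamps, rowPrefixSum_add (hx ▸ finite_support_lamps x)
    (hx ▸ finite_support_lamps_comp_add_right x _), mem_support, Pi.add_apply,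
    rowPrefixSum_comp_add_right, rowPrefixSum_of_eq_zero_off_column hcol,
    rowPrefixSum_of_eq_zero_off_column hcol, hcy]
  simp only [column, Finset.coe_product, Set.mem_prod, Finset.coe_Ico, Finset.coe_Ioc, Set.mem_Ico,
    Set.mem_Ioc, Prod.mk_add_mk, add_zero, true_and]
  have h11 : (1 : ZMod 2) + 1 = 0 := rfl
  split_ifs <;> simp only [h11, add_zero, zero_add, ne_eq, not_true_eq_false, one_ne_zero,
    not_false_eq_true, true_iff, false_iff] <;> omega

end PrefixSupport

section Generators

lemma lamps_a6 : lamps a6 = column 1 := by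
  ext ⟨v₁, v₂⟩
  simp only [lamps, a6, ofPassive, toBase, SemidirectProduct.left_inl, column, ofAdd_eq_one,
    Prod.ext_iff, Prod.fst_zero, Prod.snd_zero]
  split_ifs <;> first | rfl | omega

lemma lamps_b6 : lamps b6 = 0 := rfl

lemma cursor_b6 : cursor b6 = (1, 0) := rfl

lemma lamps_c6 : lamps c6 = 0 := rfl

lemma b6_pow (n : ℕ) : b6 ^ n = ofActive _ _ (ofAdd ((n : ℤ), (0 : ℤ))) := by
  rw [b6, ofActive, ofActive, ← map_pow, ← ofAdd_nsmul, Prod.smul_mk, nsmul_eq_mul, nsmul_zero,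
    mul_one]

lemma lamps_b6_pow (n : ℕ) : lamps (b6 ^ n) = 0 := by
  rw [b6_pow]; rfl

lemma cursor_b6_pow (n : ℕ) : cursor (b6 ^ n) = ((n : ℤ), 0) := by
  rw [b6_pow]; rfl

lemma lamps_pow_a6_mul_c6 (n : ℕ) : lamps ((a6 * c6) ^ n) = column n := by
  induction n with
  | zero =>
    ext v
    simp only [pow_zero, lamps_one, Pi.zero_apply, column, CharP.cast_eq_zero, neg_zero]
    exact (if_neg (by omega)).symm
  | succ n ih =>
    ext ⟨v₁, v₂⟩
    rw [pow_succ', lamps_mul, lamps_mul, lamps_a6, lamps_c6, ih, Pi.zero_apply,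
      show cursor (a6 * c6) = (0, 1) from rfl, Prod.mk_add_mk, add_zero, add_zero]
    simp only [column, Nat.cast_add, Nat.cast_one]
    split_ifs <;> first | decide | omega

lemma b6_mul_c6 : b6 * c6 = c6 * b6 := by
  rw [b6, c6, ofActive, ofActive, ← map_mul, mul_comm, map_mul]

end Generators

section DistortedSubgroup

abbrev H6 : Subgroup Z2wrZ2 := closure {b6, c6, ⁅a6, b6⁆}

lemma H6_le_finitePrefixSubgroup : H6 ≤ finitePrefixSubgroup := by
  have hzero : ∀ g, lamps g = 0 → g ∈ finitePrefixSubgroup := fun g hg => by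
    change (prefixSupport g).Finite
    rw [prefixSupport_of_lamps_eq_zero hg]
    exact Set.finite_empty
  rw [closure_le]
  rintro g (rfl | rfl | rfl)
  · exact hzero _ lamps_b6
  · exact hzero _ lamps_c6
  · change (prefixSupport _).Finite
    rw [prefixSupport_commutatorElement (m := 1) lamps_a6 lamps_b6 (by simpa using cursor_b6)]
    exact Finset.finite_toSet _

lemma H6_le_closure : H6 ≤ closure {a6, b6, c6} := by
  have ha : a6 ∈ closure {a6, b6, c6} := subset_closure (by simp)
  have hb : b6 ∈ closure {a6, b6, c6} := subset_closure (by simp)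
  have hc : c6 ∈ closure {a6, b6, c6} := subset_closure (by simp)
  rw [closure_le]
  rintro g (rfl | rfl | rfl)
  · exact hb
  · exact hc
  · rw [commutatorElement_def]
    exact mul_mem (mul_mem (mul_mem ha hb) (inv_mem ha)) (inv_mem hb)

lemma right_pow_a6_mul_c6 (n : ℕ) : ((a6 * c6) ^ n).right = (c6 ^ n).right := by
  rw [← SemidirectProduct.rightHom_eq_right, map_pow, map_pow, map_mul, a6, ofPassive,
    SemidirectProduct.rightHom_inl, one_mul]

noncomputable def lampSquare (n : ℕ) : Z2wrZ2 := ⁅(a6 * c6) ^ n, b6 ^ n⁆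

lemma commutatorElement_pow_a6_mul_c6_b6_mem (n : ℕ) : ⁅(a6 * c6) ^ n, b6⁆ ∈ H6 := by
  have hc : c6 ∈ H6 := subset_closure (by simp)
  have ht : ⁅a6, b6⁆ ∈ H6 := subset_closure (by simp)
  have hac : ⁅a6 * c6, b6⁆ = ⁅a6, b6⁆ := by
    simp only [commutatorElement_def, mul_inv_rev, mul_assoc, ← b6_mul_c6]
    group
  induction n with
  | zero => simp
  | succ n ih =>
    -- `⁅a, b⁆` has trivial cursor, so conjugating it by `(ac)ⁿ` is the same as by `cⁿ`.
    rw [pow_succ, commutatorElement_mul_left_eq_conj_mul, hac,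
      conj_eq_conj_of_right_eq (x' := c6 ^ n) right_commutatorElement (right_pow_a6_mul_c6 n)]
    exact mul_mem (mul_mem (mul_mem (pow_mem hc n) ht) (inv_mem (pow_mem hc n))) ih

lemma lampSquare_mem (n : ℕ) : lampSquare n ∈ H6 :=
  commutatorElement_pow_right_mem (subset_closure (by simp))
    (commutatorElement_pow_a6_mul_c6_b6_mem n) n

lemma ncard_prefixSupport_lampSquare (n : ℕ) : (prefixSupport (lampSquare n)).ncard = n ^ 2 := by
  rw [lampSquare, prefixSupport_commutatorElement (lamps_pow_a6_mul_c6 n) (lamps_b6_pow n)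
    (cursor_b6_pow n), Set.ncard_coe_finset, Finset.card_product, Int.card_Ico, Int.card_Ioc]
  simp [sq]

lemma wordLength_lampSquare_le (n : ℕ) : wordLength {a6, b6, c6} (lampSquare n) ≤ 6 * n := by
  have ha : a6 ∈ closure {a6, b6, c6} := subset_closure (by simp)
  have hb : b6 ∈ closure {a6, b6, c6} := subset_closure (by simp)
  have hc : c6 ∈ closure {a6, b6, c6} := subset_closure (by simp)
  calc wordLength {a6, b6, c6} (lampSquare n)
      ≤ 2 * (wordLength {a6, b6, c6} ((a6 * c6) ^ n) + wordLength {a6, b6, c6} (b6 ^ n)) :=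
        wordLength_commutatorElement_le (pow_mem (mul_mem ha hc) n) (pow_mem hb n)
    _ ≤ 2 * (n * (1 + 1) + n * 1) := by
        gcongr
        · exact (wordLength_pow_le (mul_mem ha hc) n).trans (Nat.mul_le_mul_left n
            ((wordLength_mul_le ha hc).trans (add_le_add (wordLength_le_one (by simp))
              (wordLength_le_one (by simp)))))
        · exact (wordLength_pow_le hb n).trans
            (Nat.mul_le_mul_left n (wordLength_le_one (by simp)))
    _ = 6 * n := by ring

end DistortedSubgroup

/-- The subgroup `H = ⟨b, c, [a,b]⟩` of `(ℤ/2ℤ) wr ℤ²` satisfies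
`Δ_H ⪰ l²`; in particular it is a distorted finitely generated subgroup. -/
theorem statement6 :
    ∀ S : Set ↥(Subgroup.closure {b6, c6, ⁅a6, b6⁆}),
      S.Finite → Subgroup.closure S = ⊤ →
      Dominates (fun l => l ^ 2)
        (distortion {a6, b6, c6} (Subgroup.closure {b6, c6, ⁅a6, b6⁆}) S) ∧
      ¬ DistEquiv (distortion {a6, b6, c6} (Subgroup.closure {b6, c6, ⁅a6, b6⁆}) S)
          (fun l => l) := by
  intro S hS hgen
  have hdom : Dominates (fun l => l ^ 2) (distortion {a6, b6, c6} H6 S) :=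
    dominates_distortion_of_subadditive (Set.toFinite _) H6_le_closure hS hgen
      (fun h => (prefixSupport h).ncard) (by simp [prefixSupport_of_lamps_eq_zero lamps_one])
      (fun x y => ncard_prefixSupport_mul_le (H6_le_finitePrefixSubgroup x.2)
        (H6_le_finitePrefixSubgroup y.2))
      _ (fun n => ⟨lampSquare n, lampSquare_mem n⟩) 6 wordLength_lampSquare_le
      (fun n => (ncard_prefixSupport_lampSquare n).ge)
  exact ⟨hdom, not_distEquiv_id_of_dominates_sq hdom⟩

end DistortionPaper
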